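/- Let σ′ ⊆ ℝ^g be a compact convex set with 0 ∈ σ′, and suppose σ′ = ⋃_{λ ∈ Λ} σ_λ for a finite family of compact convex sets σ_λ. Then C(0,σ′) = ⋃ { C(0,σ_λ) : λ ∈ Λ, 0 ∈ σ_λ }. -/
import Mathlib


open Matrix Set

noncomputable section

/-- The standard lattice `ℤ^g` sitting inside `ℝ^g`. -/
def latticePts (g : ℕ) : Set (Fin g → ℝ) :=
  Set.range (fun a : Fin g → ℤ => fun i => (a i : ℝ))

/-- `σ` is a (closed) Delaunay cell of the bilinear form `B`: there is an `α ∈ ℝ^g`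
such that `σ` is the convex hull of the lattice points nearest to `α`
(with respect to the distance defined by `B`). -/
def IsDelaunayCell {g : ℕ} (B : (Fin g → ℝ) → (Fin g → ℝ) → ℝ)
    (σ : Set (Fin g → ℝ)) : Prop :=
  ∃ α : Fin g → ℝ, σ = convexHull ℝ
    {a | a ∈ latticePts g ∧ ∀ b ∈ latticePts g, B (a - α) (a - α) ≤ B (b - α) (b - α)}

/-- `C(0,S)`: the cone generated by `S` over the nonnegative reals. -/
def cone0 {g : ℕ} (S : Set (Fin g → ℝ)) : Set (Fin g → ℝ) :=
  {x | ∃ r : ℝ, 0 ≤ r ∧ ∃ y ∈ convexHull ℝ S, x = r • y}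

/-- `Semi(0, S ∩ ℤ^g)`: the additive submonoid generated by the lattice points of `S`. -/
def semi0 {g : ℕ} (S : Set (Fin g → ℝ)) : Set (Fin g → ℝ) :=
  (AddSubmonoid.closure (S ∩ latticePts g) : AddSubmonoid (Fin g → ℝ))

/-- If a compact convex set `σ'` containing `0` is a finite union of compact convex sets
`σ_λ`, then `C(0,σ') = ⋃ {C(0,σ_λ) : 0 ∈ σ_λ}`. -/
theorem cone0_of_union
    (g : ℕ) (Λ : Type) [Fintype Λ]
    (σ' : Set (Fin g → ℝ)) (σ : Λ → Set (Fin g → ℝ))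
    (hc : IsCompact σ') (hconv : Convex ℝ σ') (h0 : (0 : Fin g → ℝ) ∈ σ')
    (hcl : ∀ l, IsCompact (σ l)) (hcvl : ∀ l, Convex ℝ (σ l))
    (hun : σ' = ⋃ l, σ l) :
    cone0 σ' = ⋃ (l) (_ : (0 : Fin g → ℝ) ∈ σ l), cone0 (σ l) := by
  ext x
  simp only [mem_iUnion]
  constructor
  · rintro ⟨r, hr, y, hy, rfl⟩
    rw [hconv.convexHull_eq] at hy
    rcases eq_or_lt_of_le hr with rfl | hr
    · obtain ⟨l, hl⟩ : ∃ l, (0 : Fin g → ℝ) ∈ σ l := by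
        have := h0; rw [hun] at this; simpa using this
      exact ⟨l, hl, 0, le_refl 0, 0, subset_convexHull ℝ _ hl, by simp⟩
    · have hseqmem : ∀ n : ℕ, (1 / (n + 1) : ℝ) • y ∈ σ' := by
        intro n
        apply hconv.smul_mem_of_zero_mem h0 hy
        constructor
        · positivity
        · rw [div_le_one (by positivity)]
          linarith [Nat.cast_nonneg (α := ℝ) n]
      have hchoice : ∀ n : ℕ, ∃ l, (1 / (n + 1) : ℝ) • y ∈ σ l := by
        intro n
        have := hseqmem n
        rw [hun] at this
        simpa using this
      choose f hf using hchoice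
      obtain ⟨l₀, hl₀'⟩ := Finite.exists_infinite_fiber f
      have hl₀ : (f ⁻¹' {l₀}).Infinite := Set.infinite_coe_iff.mp hl₀'
      -- 0 ∈ σ l₀
      have h0l : (0 : Fin g → ℝ) ∈ σ l₀ := by
        have hclosed : IsClosed (σ l₀) := (hcl l₀).isClosed
        rw [← hclosed.closure_eq]
        rw [Metric.mem_closure_iff]
        intro ε hε
        obtain ⟨N, hN⟩ := exists_nat_gt (‖y‖ / ε)
        obtain ⟨n, hn, hNn⟩ := hl₀.exists_gt N
        refine ⟨(1 / (n + 1) : ℝ) • y, ?_, ?_⟩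
        · rw [Set.mem_preimage, Set.mem_singleton_iff] at hn; rw [← hn]; exact hf n
        · rw [dist_comm, dist_zero_right, norm_smul]
          have hn1 : (0 : ℝ) < n + 1 := by positivity
          rw [Real.norm_eq_abs, abs_of_pos (by positivity)]
          rw [div_mul_eq_mul_div, one_mul, div_lt_iff₀ hn1]
          have h1 : ‖y‖ / ε < N := hN
          have h2 : (N : ℝ) < n + 1 := by
            have : (N : ℝ) < n := by exact_mod_cast hNn
            linarith
          have h3 : ‖y‖ / ε < n + 1 := lt_trans h1 h2
          calc ‖y‖ = (‖y‖ / ε) * ε := by field_simp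
            _ < (n + 1) * ε := by
                apply mul_lt_mul_of_pos_right h3 hε
            _ = ε * (n + 1) := by ring
      -- get a point of the fiber
      obtain ⟨n, hn, _⟩ := hl₀.exists_gt 0
      rw [Set.mem_preimage, Set.mem_singleton_iff] at hn
      have hmem : (1 / (n + 1) : ℝ) • y ∈ σ l₀ := by rw [← hn]; exact hf n
      refine ⟨l₀, h0l, r * (n + 1), by positivity,
        (1 / (n + 1) : ℝ) • y, subset_convexHull ℝ _ hmem, ?_⟩
      rw [smul_smul]
      congr 1
      field_simp
  · rintro ⟨l, h0l, r, hr, y, hy, rfl⟩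
    refine ⟨r, hr, y, ?_, rfl⟩
    exact convexHull_mono (by rw [hun]; exact subset_iUnion σ l) hy
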